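/- Let N be a labelled Petri net, f ∈ Σ_F a fault, and V_f its verifier. Then f is not diagnosable in N if and only if V_f has an infinite trace containing an occurrence of the first-replica copy f¹ of the fault f. -/

import Mathlib

/-! Labelled Petri nets -/

structure PetriNet (P : Type*) (T : Type*) (Λ : Type*) where
  flowPT : P → T → Prop
  flowTP : T → P → Prop
  label : T → Λ
  init : Set P

namespace PetriNet

variable {P T Λ : Type*}

def preset (N : PetriNet P T Λ) (t : T) : Set P := {p | N.flowPT p t}

def postset (N : PetriNet P T Λ) (t : T) : Set P := {p | N.flowTP t p}

def fire (N : PetriNet P T Λ) (M : Set P) (t : T) : Set P := (M \ N.preset t) ∪ N.postset t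

/-- An (infinite) run of a Petri net. -/
structure Run (N : PetriNet P T Λ) where
  marking : ℕ → Set P
  trans : ℕ → T
  h0 : marking 0 = N.init
  henabled : ∀ k, N.preset (trans k) ⊆ marking k
  hstep : ∀ k, marking (k + 1) = N.fire (marking k) (trans k)

/-- The trace of a run: the infinite word of labels of the fired transitions. -/
def Run.trace {N : PetriNet P T Λ} (r : Run N) : ℕ → Λ := fun k => N.label (r.trans k)

/-- The set of infinite traces of a Petri net. -/
def InfTraces (N : PetriNet P T Λ) : Set (ℕ → Λ) := {σ | ∃ r : Run N, r.trace = σ}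

/-- Reachable markings. -/
inductive ReachM (N : PetriNet P T Λ) : Set P → Prop
  | init : ReachM N N.init
  | step (M : Set P) (t : T) : ReachM N M → N.preset t ⊆ M → ReachM N (N.fire M t)

/-- A net is live if every reachable marking enables some transition. -/
def Live (N : PetriNet P T Λ) : Prop := ∀ M, N.ReachM M → ∃ t, N.preset t ⊆ M

/-- `FireSeq N M l M'`: the finite sequence `l` of transitions can fire from `M`, yielding `M'`. -/
inductive FireSeq (N : PetriNet P T Λ) : Set P → List T → Set P → Prop
  | nil (M : Set P) : FireSeq N M [] M
  | cons (M : Set P) (t : T) (l : List T) (M' : Set P) :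
      N.preset t ⊆ M → FireSeq N (N.fire M t) l M' → FireSeq N M (t :: l) M'

/-- The net has no cycle of unobservable transitions. -/
def NoUnobsCycle (N : PetriNet P T Λ) (Obs : Set Λ) : Prop :=
  ¬ ∃ (M : Set P) (l : List T), N.ReachM M ∧ l ≠ [] ∧ (∀ t ∈ l, N.label t ∉ Obs) ∧
      N.FireSeq M l M

end PetriNet

/-! Finite-or-infinite words as `ℕ → Option Λ`, observable projection via filtering. -/

/-- View an infinite word as a (possibly finite) word. -/
def injWord {Λ : Type*} (σ : ℕ → Λ) : ℕ → Option Λ := fun n => some (σ n)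

open scoped Classical in
/-- Erase from the word `w` all letters not in `S`, i.e. keep the subsequence of letters
belonging to `S` (the result is `none` from some point on if only finitely many remain). -/
noncomputable def filterWord {Λ : Type*} (S : Set Λ) (w : ℕ → Option Λ) : ℕ → Option Λ :=
  fun n =>
    if {k | ∃ a ∈ S, w k = some a}.Infinite ∨ n < {k | ∃ a ∈ S, w k = some a}.ncard then
      w (Nat.nth (fun k => ∃ a ∈ S, w k = some a) n)
    else none

/-- Observable projection of a (possibly finite) word. -/
noncomputable def obsWord {Λ : Type*} (Obs : Set Λ) (w : ℕ → Option Λ) : ℕ → Option Λ :=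
  filterWord Obs w

/-- Observable projection of an infinite word. -/
noncomputable def obsInf {Λ : Type*} (Obs : Set Λ) (σ : ℕ → Λ) : ℕ → Option Λ :=
  filterWord Obs (injWord σ)

/-- The letter `f` occurs in the infinite word `σ`. -/
def occursInf {Λ : Type*} (f : Λ) (σ : ℕ → Λ) : Prop := ∃ k, σ k = f

/-- The letter `f` occurs in the (possibly finite) word `w`. -/
def occursWord {Λ : Type*} (f : Λ) (w : ℕ → Option Λ) : Prop := ∃ k, w k = some f

namespace PetriNet

variable {P T Λ : Type*}

/-- The fault `f` is diagnosable in the net `N`. -/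
def FaultDiagnosable (Obs : Set Λ) (N : PetriNet P T Λ) (f : Λ) : Prop :=
  ∀ σ ∈ N.InfTraces, ∀ α ∈ N.InfTraces,
    obsInf Obs σ = obsInf Obs α → occursInf f σ → occursInf f α

/-- The net `N` is diagnosable: every fault of `Flt` is diagnosable in it. -/
def Diagnosable (Obs Flt : Set Λ) (N : PetriNet P T Λ) : Prop :=
  ∀ f ∈ Flt, N.FaultDiagnosable Obs f

/-- The `f`-fault-free version of a net: all transitions labelled `f` are deleted. -/
def faultFree (N : PetriNet P T Λ) (f : Λ) : PetriNet P {t : T // N.label t ≠ f} Λ where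
  flowPT p t := N.flowPT p t.1
  flowTP t p := N.flowTP t.1 p
  label t := N.label t.1
  init := N.init

end PetriNet

/-! Components: deterministic automata with a given alphabet. -/

structure Component (Q : Type*) (Λ : Type*) where
  alph : Set Λ
  delta : Q → Λ → Option Q
  start : Q
  dom : ∀ q a q', delta q a = some q' → a ∈ alph

namespace Component

variable {Q Λ : Type*}

/-- The infinite traces of a component: words labelling infinite paths from the initial state. -/
def InfTraces (C : Component Q Λ) : Set (ℕ → Λ) :=
  {σ | ∃ π : ℕ → Q, π 0 = C.start ∧ ∀ k, C.delta (π k) (σ k) = some (π (k + 1))}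

inductive Reach (C : Component Q Λ) : Q → Prop
  | start : Reach C C.start
  | step (q : Q) (a : Λ) (q' : Q) : Reach C q → C.delta q a = some q' → Reach C q'

/-- A component is live if every reachable state enables some action. -/
def Live (C : Component Q Λ) : Prop := ∀ q, C.Reach q → ∃ a q', C.delta q a = some q'

/-- Extension of the transition function to finite words. -/
def deltaStar (C : Component Q Λ) : Q → List Λ → Option Q
  | q, [] => some q
  | q, a :: l =>
    match C.delta q a with
    | some q' => C.deltaStar q' l
    | none => none

/-- The component has no cycle of unobservable actions. -/
def NoUnobsCycle (C : Component Q Λ) (Obs : Set Λ) : Prop :=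
  ¬ ∃ (q : Q) (l : List Λ), C.Reach q ∧ l ≠ [] ∧ (∀ a ∈ l, a ∉ Obs) ∧
      C.deltaStar q l = some q

/-- The fault `f` is diagnosable in the component `C`. -/
def FaultDiagnosable (Obs : Set Λ) (C : Component Q Λ) (f : Λ) : Prop :=
  ∀ σ ∈ C.InfTraces, ∀ α ∈ C.InfTraces,
    obsInf Obs σ = obsInf Obs α → occursInf f σ → occursInf f α

/-- The component `C` is diagnosable: every fault of `Flt` is diagnosable in it. -/
def Diagnosable (Obs Flt : Set Λ) (C : Component Q Λ) : Prop :=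
  ∀ f ∈ Flt, C.FaultDiagnosable Obs f

/-- The transitions of a component, as triples `(q, a, q')` with `δ q a = q'`. -/
def Trans (C : Component Q Λ) : Type _ :=
  {x : Q × Λ × Q // C.delta x.1 x.2.1 = some x.2.2}

/-- The labelled Petri net corresponding to a component. -/
def toNet (C : Component Q Λ) : PetriNet Q C.Trans Λ where
  flowPT p t := p = t.1.1
  flowTP t p := p = t.1.2.2
  label t := t.1.2.1
  init := {C.start}

end Component

/-! Labelled Petri nets equipped with an alphabet, and their product. -/

structure ANet (P : Type*) (T : Type*) (Λ : Type*) where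
  net : PetriNet P T Λ
  alph : Set Λ
  labmem : ∀ t, net.label t ∈ alph

/-- The net of a component, equipped with the component's alphabet. -/
def Component.toANet {Q Λ : Type*} (C : Component Q Λ) : ANet Q C.Trans Λ :=
  ⟨C.toNet, C.alph, fun t => C.dom t.1.1 t.1.2.1 t.1.2.2 t.2⟩

/-- A synchronized transition of the product of the nets `Ns`: a label together with a choice
of one transition with that label from every component net whose alphabet contains the label
(components whose alphabet does not contain the label do not participate). -/
structure SyncTrans {ι : Type*} {P T : ι → Type*} {Λ : Type*} (Ns : ∀ i, ANet (P i) (T i) Λ) where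
  lab : Λ
  choice : ∀ i, Option (T i)
  used : ∃ i, lab ∈ (Ns i).alph
  sync : ∀ i, lab ∈ (Ns i).alph → ∃ t, choice i = some t ∧ (Ns i).net.label t = lab
  not_mem : ∀ i, lab ∉ (Ns i).alph → choice i = none

/-- The product of labelled Petri nets, synchronizing on shared actions. -/
def ANet.prod {ι : Type*} {P T : ι → Type*} {Λ : Type*} (Ns : ∀ i, ANet (P i) (T i) Λ) :
    PetriNet (Σ i, P i) (SyncTrans Ns) Λ where
  flowPT p t := ∃ u, t.choice p.1 = some u ∧ (Ns p.1).net.flowPT p.2 u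
  flowTP t p := ∃ u, t.choice p.1 = some u ∧ (Ns p.1).net.flowTP u p.2
  label t := t.lab
  init := {p | p.2 ∈ (Ns p.1).net.init}

/-- `IsProjOf Ns i σ w`: the word `w` is the projection on component `i` of the infinite
trace `σ` of the product net, i.e. there is a run of the product net with trace `σ` whose
projection on component `i` (keeping exactly the transitions whose label is in the `i`-th
alphabet) has trace `w`. -/
def IsProjOf {ι : Type*} {P T : ι → Type*} {Λ : Type*} (Ns : ∀ i, ANet (P i) (T i) Λ)
    (i : ι) (σ : ℕ → Λ) (w : ℕ → Option Λ) : Prop :=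
  ∃ r : (ANet.prod Ns).Run, r.trace = σ ∧ filterWord (Ns i).alph (injWord σ) = w

/-- The `f`-fault-free version of an alphabet-equipped net. -/
def ANet.faultFree {P T Λ : Type*} (N : ANet P T Λ) (f : Λ) :
    ANet P {t : T // N.net.label t ≠ f} Λ :=
  ⟨N.net.faultFree f, N.alph, fun t => N.labmem t.1⟩

/-- The family of nets used to build `Nⁱ`: component `i` itself together with the
`f`-fault-free versions of all the other components (the subtype condition is trivial
for `j = i` and says "not labelled `f`" for `j ≠ i`). -/
def exceptNet {ι : Type*} {Q : ι → Type*} {Λ : Type*} (C : ∀ j, Component (Q j) Λ)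
    (f : Λ) (i j : ι) :
    ANet (Q j) {t : (C j).Trans // j ≠ i → (C j).toNet.label t ≠ f} Λ where
  net :=
    { flowPT := fun p t => (C j).toNet.flowPT p t.1
      flowTP := fun t p => (C j).toNet.flowTP t.1 p
      label := fun t => (C j).toNet.label t.1
      init := (C j).toNet.init }
  alph := (C j).alph
  labmem := fun t => (C j).dom t.1.1.1 t.1.1.2.1 t.1.1.2.2 t.1.2

/-- The net `Nⁱ`: the product of `N_{A_i}` with the `f`-fault-free versions of all the
other components. -/
def Nhat {ι : Type*} {Q : ι → Type*} {Λ : Type*} (C : ∀ j, Component (Q j) Λ)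
    (f : Λ) (i : ι) :=
  ANet.prod (fun j => exceptNet C f i j)

/-! The product automaton. -/

open scoped Classical in
noncomputable def prodDelta {ι : Type*} {Q : ι → Type*} {Λ : Type*}
    (C : ∀ i, Component (Q i) Λ) (q : ∀ i, Q i) (a : Λ) : Option (∀ i, Q i) :=
  if (∃ i, a ∈ (C i).alph) ∧ ∀ i, a ∈ (C i).alph → (C i).delta (q i) a ≠ none then
    some (fun i => ((C i).delta (q i) a).getD (q i))
  else none

/-- The product automaton `A₁ × ⋯ × A_n`. -/
noncomputable def prodComponent {ι : Type*} {Q : ι → Type*} {Λ : Type*}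
    (C : ∀ i, Component (Q i) Λ) : Component (∀ i, Q i) Λ where
  alph := ⋃ i, (C i).alph
  delta := prodDelta C
  start := fun i => (C i).start
  dom := by
    intro q a q' h
    unfold prodDelta at h
    split_ifs at h with hc
    · exact Set.mem_iUnion.2 hc.1

/-! The verifier. -/

/-- Labels of the verifier: either a common (fused, observable) label, or a label of a
local transition of the first replica (`a¹`, written `.inr (.inl a)`), or of the second
replica (`a²`, written `.inr (.inr a)`). -/
abbrev VerLabel (Λ : Type*) := Λ ⊕ (Λ ⊕ Λ)

/-- Transitions of the verifier: fused pairs of an observable transition of the first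
replica with a same-labelled transition of the second (fault-free) replica, or local
unobservable transitions of the first replica, or local unobservable non-`f` transitions
of the second replica. -/
def VerTrans {P T Λ : Type*} (N : PetriNet P T Λ) (Obs : Set Λ) (f : Λ) : Type _ :=
  {x : T × T // N.label x.1 ∈ Obs ∧ N.label x.2 = N.label x.1 ∧ N.label x.2 ≠ f} ⊕
    ({t : T // N.label t ∉ Obs} ⊕ {t : T // N.label t ∉ Obs ∧ N.label t ≠ f})

/-- The verifier `V_f` of `N` with respect to the fault `f`: two replicas of `N` put
side by side, the `f`-labelled transitions removed from the second replica, and each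
observable transition of the first replica fused with each same-labelled transition of
the second replica. -/
def verifier {P T Λ : Type*} (N : PetriNet P T Λ) (Obs : Set Λ) (f : Λ) :
    PetriNet (P ⊕ P) (VerTrans N Obs f) (VerLabel Λ) where
  flowPT p t :=
    match p, t with
    | .inl p, .inl x => N.flowPT p x.1.1
    | .inr p, .inl x => N.flowPT p x.1.2
    | .inl p, .inr (.inl t) => N.flowPT p t.1
    | .inr p, .inr (.inr t) => N.flowPT p t.1
    | _, _ => False
  flowTP t p :=
    match p, t with
    | .inl p, .inl x => N.flowTP x.1.1 p
    | .inr p, .inl x => N.flowTP x.1.2 p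
    | .inl p, .inr (.inl t) => N.flowTP t.1 p
    | .inr p, .inr (.inr t) => N.flowTP t.1 p
    | _, _ => False
  label t :=
    match t with
    | .inl x => Sum.inl (N.label x.1.1)
    | .inr (.inl t) => Sum.inr (Sum.inl (N.label t))
    | .inr (.inr t) => Sum.inr (Sum.inr (N.label t))
  init := Sum.inl '' N.init ∪ Sum.inr '' N.init

/-!
If `σ` and `α` are infinite traces of `N` with the same observation, `f` occurring in `σ` but not
in `α`, then interleaving them greedily (unobservable steps of `σ`, else unobservable steps of `α`,
else the next observable steps of both, fused) gives a run of `V_f` that fires `f¹` when `σ`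
fires `f`. Conversely, a run of `V_f` splits into one run of `N` per replica. Each replica moves
infinitely often: otherwise the other one eventually fires only unobservable transitions, and
since there are finitely many markings this closes an unobservable cycle. The observable steps
of both runs are exactly the fused transitions, so the two runs look alike; the first fires `f`
and the second replica has no `f`-transitions.
-/

open scoped Classical

theorem Set.infinite_or_lt_ncard_iff {α : Type*} {s : Set α} {n : ℕ} :
    s.Infinite ∨ n < s.ncard ↔ ∀ hs : s.Finite, n < hs.toFinset.card := by
  rcases s.finite_or_infinite with hs | hs
  · simp [hs, Set.ncard_eq_toFinset_card s hs]
  · simp [hs]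

section filterWord

variable {Λ : Type*} {S : Set Λ}

theorem filterWord_eq_some_iff {w : ℕ → Option Λ} {n : ℕ} {a : Λ} :
    filterWord S w n = some a ↔
      a ∈ S ∧ ∃ k, w k = some a ∧ Nat.count (fun k => ∃ b ∈ S, w k = some b) k = n := by
  set p := fun k => ∃ b ∈ S, w k = some b
  rw [filterWord]
  split_ifs with hn <;> rw [Set.infinite_or_lt_ncard_iff] at hn
  · obtain ⟨b, hbS, hb⟩ : p (Nat.nth p n) := Nat.nth_mem n hn
    refine ⟨fun ha => ?_, fun ⟨_, k, hk, hcount⟩ => ?_⟩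
    · obtain rfl : b = a := Option.some.inj (hb.symm.trans ha)
      exact ⟨hbS, _, hb, Nat.count_nth hn⟩
    · rw [← hcount, Nat.nth_count ⟨a, ‹a ∈ S›, hk⟩, hk]
  · refine iff_of_false (by simp) fun ⟨ha, k, hk, hcount⟩ => hn fun hs => ?_
    exact hcount ▸ Nat.count_lt_card hs ⟨a, ha, hk⟩

theorem filterWord_comp_of_strictMono {w : ℕ → Option Λ} {g : ℕ → ℕ} (hg : StrictMono g)
    (hw : ∀ k, (w k).isSome → k ∈ Set.range g) : filterWord S (w ∘ g) = filterWord S w := by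
  set p := fun k => ∃ b ∈ S, w k = some b
  have hp : ∀ k, p k → k ∈ Set.range g := fun k ⟨b, _, hb⟩ => hw k (by simp [hb])
  have himage : g '' {j | p (g j)} = {k | p k} := by
    ext k
    refine ⟨fun ⟨j, hj, hjk⟩ => hjk ▸ hj, fun hk => ?_⟩
    obtain ⟨j, rfl⟩ := hp k hk
    exact ⟨j, hk, rfl⟩
  have hinf : {j | p (g j)}.Infinite ↔ {k | p k}.Infinite := by
    rw [← himage, Set.infinite_image_iff hg.injective.injOn]
  have hcard : {j | p (g j)}.ncard = {k | p k}.ncard := by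
    rw [← himage, Set.ncard_image_of_injective _ hg.injective]
  funext n
  change (if {j | p (g j)}.Infinite ∨ n < {j | p (g j)}.ncard then
    w (g (Nat.nth (fun j => p (g j)) n)) else none) = filterWord S w n
  rw [filterWord, hinf, hcard]
  split_ifs with hn
  · rw [Nat.nth_comp_of_strictMono hg hp (Set.infinite_or_lt_ncard_iff.1 hn)]
  · rfl

theorem filterWord_congr {w w' : ℕ → Option Λ}
    (h : ∀ k, ∀ a ∈ S, w k = some a ↔ w' k = some a) : filterWord S w = filterWord S w' := by
  have hp : (fun k => ∃ b ∈ S, w k = some b) = fun k => ∃ b ∈ S, w' k = some b :=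
    funext fun k => propext <| exists_congr fun b => and_congr_right (h k b)
  funext n
  refine Option.ext fun a => ?_
  simp only [filterWord_eq_some_iff, hp]
  exact and_congr_right fun ha => exists_congr fun k => and_congr_left' (h k a ha)

theorem obsInf_eq_some_iff {σ : ℕ → Λ} {n : ℕ} {a : Λ} :
    obsInf S σ n = some a ↔ a ∈ S ∧ ∃ k, σ k = a ∧ Nat.count (fun k => σ k ∈ S) k = n := by
  simp [obsInf, filterWord_eq_some_iff, injWord]

theorem obsInf_count {σ : ℕ → Λ} {k : ℕ} (hk : σ k ∈ S) :
    obsInf S σ (Nat.count (fun k => σ k ∈ S) k) = some (σ k) :=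
  obsInf_eq_some_iff.2 ⟨hk, k, rfl, rfl⟩

theorem obsInf_ne_of_forall_ge_notMem {σ α : ℕ → Λ} {i j : ℕ}
    (hi : σ i ∈ S) (hcount : Nat.count (fun k => σ k ∈ S) i = Nat.count (fun k => α k ∈ S) j)
    (hα : ∀ k, j ≤ k → α k ∉ S) : obsInf S σ ≠ obsInf S α := by
  intro hobs
  obtain ⟨-, k, hαk, hk⟩ := obsInf_eq_some_iff.1 (congrFun hobs _ ▸ obsInf_count hi)
  have hS : α k ∈ S := hαk ▸ hi
  rcases lt_or_ge k j with hkj | hjk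
  · exact (Nat.count_strict_mono hS hkj).ne (hk.trans hcount)
  · exact hα k hjk hS

end filterWord

namespace PetriNet

variable {P T Λ : Type*} {N : PetriNet P T Λ}

def fireOpt (N : PetriNet P T Λ) (M : Set P) : Option T → Set P
  | none => M
  | some t => N.fire M t

/-- A run of `N` in which a step may also fire nothing (`none`); this is how each replica
sees a run of the verifier. -/
structure StutterRun (N : PetriNet P T Λ) where
  marking : ℕ → Set P
  trans : ℕ → Option T
  marking_zero : marking 0 = N.init
  enabled : ∀ k, ∀ t ∈ trans k, N.preset t ⊆ marking k
  marking_succ : ∀ k, marking (k + 1) = N.fireOpt (marking k) (trans k)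

namespace StutterRun

variable (s : N.StutterRun)

theorem reachM (k : ℕ) : N.ReachM (s.marking k) := by
  induction k with
  | zero => exact s.marking_zero ▸ ReachM.init
  | succ k ih =>
    rw [s.marking_succ]
    cases ht : s.trans k with
    | none => exact ih
    | some t => exact ReachM.step _ t ih (s.enabled k t ht)

theorem marking_eq_of_forall_eq_none {a b : ℕ} (hab : a ≤ b)
    (h : ∀ k, a ≤ k → k < b → s.trans k = none) : s.marking b = s.marking a := by
  induction b, hab using Nat.le_induction with
  | base => rfl
  | succ b hab ih =>
    rw [s.marking_succ, h b hab (Nat.lt_succ_self b), fireOpt,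
      ih fun k hak hkb => h k hak (hkb.trans (Nat.lt_succ_self b))]

theorem exists_fireSeq {p : T → Prop} (a d : ℕ)
    (h : ∀ k, a ≤ k → k < a + d → ∃ t ∈ s.trans k, p t) :
    ∃ l : List T, l.length = d ∧ (∀ t ∈ l, p t) ∧
      N.FireSeq (s.marking a) l (s.marking (a + d)) := by
  induction d generalizing a with
  | zero => exact ⟨[], rfl, by simp, FireSeq.nil _⟩
  | succ d ih =>
    obtain ⟨t, ht, hpt⟩ := h a le_rfl (by omega)
    obtain ⟨l, hlen, hpl, hfire⟩ := ih (a + 1) fun k hak hkd => h k (by omega) (by omega)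
    refine ⟨t :: l, by simp [hlen], by simpa [hpt] using hpl,
      FireSeq.cons _ _ _ _ (s.enabled a t ht) ?_⟩
    rw [show a + (d + 1) = a + 1 + d by omega]
    rwa [s.marking_succ, ht] at hfire

theorem not_forall_unobs [Finite P] {Obs : Set Λ} (hcyc : N.NoUnobsCycle Obs) (K : ℕ) :
    ¬ ∀ k, K ≤ k → ∃ t ∈ s.trans k, N.label t ∉ Obs := by
  intro h
  obtain ⟨a, b, hab, heq⟩ := Finite.exists_ne_map_eq_of_infinite fun d => s.marking (K + d)
  wlog hlt : a < b generalizing a b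
  · exact this b a hab.symm heq.symm (by omega)
  obtain ⟨l, hlen, hunobs, hfire⟩ :=
    s.exists_fireSeq (K + a) (b - a) fun k hk _ => h k (by omega)
  refine hcyc ⟨s.marking (K + a), l, s.reachM _, List.ne_nil_of_length_pos (by omega), hunobs, ?_⟩
  rwa [show K + a + (b - a) = K + b by omega, ← heq] at hfire

variable {s} (hs : {k | (s.trans k).isSome}.Infinite)

noncomputable def toRun : N.Run where
  marking j := s.marking (Nat.nth (fun k => (s.trans k).isSome) j)
  trans j :=
    (s.trans (Nat.nth (fun k => (s.trans k).isSome) j)).get (Nat.nth_mem_of_infinite hs j)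
  h0 := by
    rw [← s.marking_zero]
    refine s.marking_eq_of_forall_eq_none (Nat.zero_le _) fun k _ hk => ?_
    by_contra hsome
    rw [Nat.nth_zero] at hk
    exact (Nat.sInf_le (Option.ne_none_iff_isSome.1 hsome)).not_gt hk
  henabled j := s.enabled _ _ (Option.get_mem _)
  hstep j := by
    obtain ⟨t, ht⟩ := Option.isSome_iff_exists.1 (Nat.nth_mem_of_infinite hs j)
    rw [s.marking_eq_of_forall_eq_none (Nat.nth_strictMono hs j.lt_succ_self) fun k hk hk' => ?_,
      s.marking_succ]
    · simp only [ht, fireOpt, Option.get_some]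
    by_contra hsome
    exact (Nat.le_nth_of_lt_nth_succ hk' (Option.ne_none_iff_isSome.1 hsome)).not_gt hk

theorem trans_nth_eq (j : ℕ) :
    s.trans (Nat.nth (fun k => (s.trans k).isSome) j) = some ((s.toRun hs).trans j) :=
  (Option.some_get _).symm

theorem exists_toRun_trans_eq {k : ℕ} {t : T} (ht : s.trans k = some t) :
    ∃ j, (s.toRun hs).trans j = t := by
  refine ⟨Nat.count (fun k => (s.trans k).isSome) k, Option.some.inj ?_⟩
  rw [← trans_nth_eq, Nat.nth_count (by simp [ht]), ht]

theorem obsInf_toRun_trace (Obs : Set Λ) :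
    obsInf Obs (s.toRun hs).trace = filterWord Obs fun k => (s.trans k).map N.label := by
  have hcomp : injWord (s.toRun hs).trace =
      (fun k => (s.trans k).map N.label) ∘ Nat.nth fun k => (s.trans k).isSome := by
    funext j
    simp only [injWord, Run.trace, Function.comp_apply, trans_nth_eq hs, Option.map_some]
  rw [obsInf, hcomp, filterWord_comp_of_strictMono (Nat.nth_strictMono hs)]
  intro k hk
  exact ⟨_, Nat.nth_count (by simpa using hk)⟩

end StutterRun

def Run.stutter (r : N.Run) (c : ℕ → ℕ) (h0 : c 0 = 0)
    (hc : ∀ m, c (m + 1) = c m ∨ c (m + 1) = c m + 1) : N.StutterRun where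
  marking m := r.marking (c m)
  trans m := if c (m + 1) = c m + 1 then some (r.trans (c m)) else none
  marking_zero := by rw [h0, r.h0]
  enabled m t ht := by
    split_ifs at ht
    · obtain rfl := Option.some.inj ht
      exact r.henabled _
    · cases ht
  marking_succ m := by
    rcases hc m with h | h
    · simp [h, fireOpt]
    · simp [h, fireOpt, r.hstep]

end PetriNet

namespace VerTrans

variable {P T Λ : Type*} {N : PetriNet P T Λ} {Obs : Set Λ} {f : Λ}

def fst : VerTrans N Obs f → Option T
  | .inl x => some x.1.1
  | .inr (.inl u) => some u.1
  | .inr (.inr _) => none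

def snd : VerTrans N Obs f → Option T
  | .inl x => some x.1.2
  | .inr (.inl _) => none
  | .inr (.inr u) => some u.1

variable (t : VerTrans N Obs f)

theorem verifier_preset_subset_iff {M : Set (P ⊕ P)} :
    (verifier N Obs f).preset t ⊆ M ↔
      (∀ u ∈ t.fst, N.preset u ⊆ Sum.inl ⁻¹' M) ∧
        (∀ u ∈ t.snd, N.preset u ⊆ Sum.inr ⁻¹' M) := by
  rcases t with x | u | u <;>
    simp [fst, snd, PetriNet.preset, verifier, Set.subset_def, Sum.forall]

theorem preimage_inl_verifier_fire (M : Set (P ⊕ P)) :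
    Sum.inl ⁻¹' (verifier N Obs f).fire M t = N.fireOpt (Sum.inl ⁻¹' M) t.fst := by
  ext p
  rcases t with x | u | u <;>
    simp [fst, PetriNet.fireOpt, PetriNet.fire, PetriNet.preset, PetriNet.postset, verifier]

theorem preimage_inr_verifier_fire (M : Set (P ⊕ P)) :
    Sum.inr ⁻¹' (verifier N Obs f).fire M t = N.fireOpt (Sum.inr ⁻¹' M) t.snd := by
  ext p
  rcases t with x | u | u <;>
    simp [snd, PetriNet.fireOpt, PetriNet.fire, PetriNet.preset, PetriNet.postset, verifier]

theorem map_label_fst_eq_some_iff {a : Λ} (ha : a ∈ Obs) :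
    t.fst.map N.label = some a ↔ t.snd.map N.label = some a := by
  rcases t with ⟨x, -, hx, -⟩ | ⟨u, hu⟩ | ⟨u, hu, -⟩
  · simp [fst, snd, hx]
  all_goals
    simp [fst, snd]
    rintro rfl
    exact hu ha

theorem label_ne_of_mem_snd {u : T} : u ∈ t.snd → N.label u ≠ f := by
  rcases t with ⟨x, -, -, hx⟩ | v | ⟨v, -, hv⟩ <;> rintro ⟨⟩
  · exact hx
  · exact hv

theorem verifier_label_eq_inr_inl_iff {a : Λ} :
    (verifier N Obs f).label t = Sum.inr (Sum.inl a) ↔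
      ∃ u ∈ t.fst, N.label u = a ∧ a ∉ Obs := by
  rcases t with ⟨x, hx, -, -⟩ | ⟨u, hu⟩ | ⟨u, -, -⟩ <;> simp [fst, verifier] <;>
    rintro rfl <;> assumption

theorem exists_unobs_snd_of_fst_eq_none : t.fst = none → ∃ u ∈ t.snd, N.label u ∉ Obs := by
  rcases t with x | u | ⟨u, hu, -⟩ <;> rintro ⟨⟩
  exact ⟨u, rfl, hu⟩

theorem exists_unobs_fst_of_snd_eq_none : t.snd = none → ∃ u ∈ t.fst, N.label u ∉ Obs := by
  rcases t with x | ⟨u, hu⟩ | u <;> rintro ⟨⟩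
  exact ⟨u, rfl, hu⟩

end VerTrans

namespace PetriNet

variable {P T Λ : Type*} {N : PetriNet P T Λ} {Obs : Set Λ} {f : Λ}

def Run.fstReplica (r : (verifier N Obs f).Run) : N.StutterRun where
  marking k := Sum.inl ⁻¹' r.marking k
  trans k := (r.trans k).fst
  marking_zero := by simp [r.h0, verifier, Set.preimage_image_eq _ Sum.inl_injective]
  enabled k := ((r.trans k).verifier_preset_subset_iff.1 (r.henabled k)).1
  marking_succ k := by rw [r.hstep, VerTrans.preimage_inl_verifier_fire]

def Run.sndReplica (r : (verifier N Obs f).Run) : N.StutterRun where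
  marking k := Sum.inr ⁻¹' r.marking k
  trans k := (r.trans k).snd
  marking_zero := by simp [r.h0, verifier, Set.preimage_image_eq _ Sum.inr_injective]
  enabled k := ((r.trans k).verifier_preset_subset_iff.1 (r.henabled k)).2
  marking_succ k := by rw [r.hstep, VerTrans.preimage_inr_verifier_fire]

def StutterRun.verifierRun (s₁ s₂ : N.StutterRun) (t : ℕ → VerTrans N Obs f)
    (h₁ : ∀ k, (t k).fst = s₁.trans k) (h₂ : ∀ k, (t k).snd = s₂.trans k) :
    (verifier N Obs f).Run where
  marking k := Sum.inl '' s₁.marking k ∪ Sum.inr '' s₂.marking k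
  trans := t
  h0 := by rw [s₁.marking_zero, s₂.marking_zero]; rfl
  henabled k := (t k).verifier_preset_subset_iff.2
    ⟨by simpa [h₁, Set.preimage_image_eq _ Sum.inl_injective] using s₁.enabled k,
      by simpa [h₂, Set.preimage_image_eq _ Sum.inr_injective] using s₂.enabled k⟩
  hstep k := by
    rw [← Set.image_preimage_inl_union_image_preimage_inr ((verifier N Obs f).fire _ (t k)),
      VerTrans.preimage_inl_verifier_fire, VerTrans.preimage_inr_verifier_fire, h₁, h₂,
      s₁.marking_succ, s₂.marking_succ]
    simp [Set.preimage_image_eq _ Sum.inl_injective, Set.preimage_image_eq _ Sum.inr_injective]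

theorem StutterRun.infinite_setOf_isSome [Finite P] (hcyc : N.NoUnobsCycle Obs)
    (s : N.StutterRun) {o : ℕ → Option T}
    (ho : ∀ k, o k = none → ∃ t ∈ s.trans k, N.label t ∉ Obs) :
    {k | (o k).isSome}.Infinite := by
  intro hfin
  obtain ⟨K, hK⟩ := hfin.bddAbove
  refine s.not_forall_unobs hcyc (K + 1) fun k hk =>
    ho k (Option.not_isSome_iff_eq_none.1 fun hsome => ?_)
  have : k ≤ K := hK hsome
  omega

theorem not_faultDiagnosable_of_verifier_trace [Finite P] (hcyc : N.NoUnobsCycle Obs)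
    {w : ℕ → VerLabel Λ} (hw : w ∈ (verifier N Obs f).InfTraces) {k : ℕ}
    (hk : w k = Sum.inr (Sum.inl f)) : ¬ N.FaultDiagnosable Obs f := by
  intro hd
  obtain ⟨r, rfl⟩ := hw
  have h₁ : {k | (r.fstReplica.trans k).isSome}.Infinite :=
    r.sndReplica.infinite_setOf_isSome hcyc fun k => (r.trans k).exists_unobs_snd_of_fst_eq_none
  have h₂ : {k | (r.sndReplica.trans k).isSome}.Infinite :=
    r.fstReplica.infinite_setOf_isSome hcyc fun k => (r.trans k).exists_unobs_fst_of_snd_eq_none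
  refine absurd (hd _ ⟨r.fstReplica.toRun h₁, rfl⟩ _ ⟨r.sndReplica.toRun h₂, rfl⟩ ?_ ?_) ?_
  · rw [StutterRun.obsInf_toRun_trace, StutterRun.obsInf_toRun_trace]
    exact filterWord_congr fun k a ha => (r.trans k).map_label_fst_eq_some_iff ha
  · obtain ⟨u, hu, hfu, -⟩ := (r.trans k).verifier_label_eq_inr_inl_iff.1 hk
    obtain ⟨j, hj⟩ := r.fstReplica.exists_toRun_trans_eq h₁ hu
    exact ⟨j, by rw [Run.trace, hj, hfu]⟩
  · rintro ⟨j, hj⟩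
    exact (r.trans _).label_ne_of_mem_snd (r.sndReplica.trans_nth_eq h₂ j) hj

end PetriNet

section syncSchedule

variable {Λ : Type*} (Obs : Set Λ) (σ α : ℕ → Λ)

noncomputable def syncSchedule : ℕ → ℕ × ℕ
  | 0 => (0, 0)
  | m + 1 =>
    let p := syncSchedule m
    if σ p.1 ∉ Obs then (p.1 + 1, p.2) else if α p.2 ∉ Obs then (p.1, p.2 + 1)
    else (p.1 + 1, p.2 + 1)

local notation "sch" => syncSchedule Obs σ α

theorem syncSchedule_succ_of_notMem {m : ℕ} (h : σ (sch m).1 ∉ Obs) :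
    sch (m + 1) = ((sch m).1 + 1, (sch m).2) := by
  simp [syncSchedule, h]

theorem syncSchedule_succ (m : ℕ) :
    (σ (sch m).1 ∉ Obs ∧ sch (m + 1) = ((sch m).1 + 1, (sch m).2)) ∨
    (σ (sch m).1 ∈ Obs ∧ α (sch m).2 ∉ Obs ∧ sch (m + 1) = ((sch m).1, (sch m).2 + 1)) ∨
    (σ (sch m).1 ∈ Obs ∧ α (sch m).2 ∈ Obs ∧ sch (m + 1) = ((sch m).1 + 1, (sch m).2 + 1)) := by
  by_cases h₁ : σ (sch m).1 ∈ Obs <;> by_cases h₂ : α (sch m).2 ∈ Obs <;>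
    simp [syncSchedule, h₁, h₂]

theorem syncSchedule_fst_succ (m : ℕ) :
    (sch (m + 1)).1 = (sch m).1 ∨ (sch (m + 1)).1 = (sch m).1 + 1 := by
  rcases syncSchedule_succ Obs σ α m with ⟨-, he⟩ | ⟨-, -, he⟩ | ⟨-, -, he⟩ <;> simp [he]

theorem syncSchedule_snd_succ (m : ℕ) :
    (sch (m + 1)).2 = (sch m).2 ∨ (sch (m + 1)).2 = (sch m).2 + 1 := by
  rcases syncSchedule_succ Obs σ α m with ⟨-, he⟩ | ⟨-, -, he⟩ | ⟨-, -, he⟩ <;> simp [he]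

theorem count_syncSchedule (m : ℕ) :
    Nat.count (fun k => σ k ∈ Obs) (sch m).1 = Nat.count (fun k => α k ∈ Obs) (sch m).2 := by
  induction m with
  | zero => rfl
  | succ m ih =>
    rcases syncSchedule_succ Obs σ α m with ⟨h₁, he⟩ | ⟨h₁, h₂, he⟩ | ⟨h₁, h₂, he⟩ <;>
      simp_all [Nat.count_succ]

variable {Obs σ α}

theorem apply_syncSchedule_eq (hobs : obsInf Obs σ = obsInf Obs α) {m : ℕ}
    (h₁ : σ (sch m).1 ∈ Obs) (h₂ : α (sch m).2 ∈ Obs) : σ (sch m).1 = α (sch m).2 := by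
  have h := obsInf_count h₁
  rw [hobs, count_syncSchedule, obsInf_count h₂] at h
  exact (Option.some.inj h).symm

theorem forall_ge_notMem_of_syncSchedule_fst_const {m : ℕ}
    (h : ∀ d, (sch (m + d)).1 = (sch m).1) :
    σ (sch m).1 ∈ Obs ∧ ∀ j, (sch m).2 ≤ j → α j ∉ Obs := by
  have hstep : ∀ d, σ (sch (m + d)).1 ∈ Obs ∧ α (sch (m + d)).2 ∉ Obs ∧
      (sch (m + d + 1)).2 = (sch (m + d)).2 + 1 := by
    intro d
    have hd := (h d).trans (h (d + 1)).symm
    rcases syncSchedule_succ Obs σ α (m + d) with ⟨-, he⟩ | ⟨h₁, h₂, he⟩ | ⟨-, -, he⟩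
    · rw [← add_assoc, he] at hd; simp at hd
    · rw [he]; exact ⟨h₁, h₂, rfl⟩
    · rw [← add_assoc, he] at hd; simp at hd
  have hsnd : ∀ d, (sch (m + d)).2 = (sch m).2 + d := by
    intro d
    induction d with
    | zero => rfl
    | succ d ih => rw [← add_assoc, (hstep d).2.2, ih, add_assoc]
  refine ⟨(hstep 0).1, fun j hj => ?_⟩
  have := (hstep (j - (sch m).2)).2.1
  rwa [hsnd, Nat.add_sub_cancel' hj] at this

theorem exists_syncSchedule_fst_eq (hobs : obsInf Obs σ = obsInf Obs α) (K : ℕ) :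
    ∃ m, (sch m).1 = K := by
  induction K with
  | zero => exact ⟨0, rfl⟩
  | succ K ih =>
    obtain ⟨m, hm⟩ := ih
    by_contra! hne
    have hconst : ∀ d, (sch (m + d)).1 = (sch m).1 := by
      intro d
      induction d with
      | zero => rfl
      | succ d ih =>
        rcases syncSchedule_fst_succ Obs σ α (m + d) with h | h
        · rw [← add_assoc, h, ih]
        · exact absurd (h.trans (by rw [ih, hm])) (hne _)
    obtain ⟨hσ, hα⟩ := forall_ge_notMem_of_syncSchedule_fst_const hconst
    exact obsInf_ne_of_forall_ge_notMem hσ (count_syncSchedule Obs σ α m) hα hobs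

end syncSchedule

namespace PetriNet

variable {P T Λ : Type*} {N : PetriNet P T Λ} {Obs : Set Λ} {f : Λ}

theorem exists_verifier_trace_of_not_faultDiagnosable (hf : f ∉ Obs)
    (hnd : ¬ N.FaultDiagnosable Obs f) :
    ∃ w ∈ (verifier N Obs f).InfTraces, ∃ k, w k = Sum.inr (Sum.inl f) := by
  simp only [FaultDiagnosable, not_forall, exists_prop] at hnd
  obtain ⟨_, ⟨rσ, rfl⟩, _, ⟨rα, rfl⟩, hobs, hfσ, hfα⟩ := hnd
  set c := syncSchedule Obs rσ.trace rα.trace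
  let s₁ := rσ.stutter (fun m => (c m).1) rfl (syncSchedule_fst_succ Obs _ _)
  let s₂ := rα.stutter (fun m => (c m).2) rfl (syncSchedule_snd_succ Obs _ _)
  have hstep : ∀ m, ∃ t : VerTrans N Obs f, t.fst = s₁.trans m ∧ t.snd = s₂.trans m := by
    intro m
    have hαf : N.label (rα.trans (c m).2) ≠ f := fun h => hfα ⟨_, h⟩
    rcases syncSchedule_succ Obs rσ.trace rα.trace m with
        ⟨h₁, he⟩ | ⟨h₁, h₂, he⟩ | ⟨h₁, h₂, he⟩ <;>
      [refine ⟨.inr (.inl ⟨rσ.trans (c m).1, h₁⟩), ?_, ?_⟩;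
       refine ⟨.inr (.inr ⟨rα.trans (c m).2, h₂, hαf⟩), ?_, ?_⟩;
       refine ⟨.inl ⟨(rσ.trans (c m).1, rα.trans (c m).2), h₁,
         (apply_syncSchedule_eq hobs h₁ h₂).symm, hαf⟩, ?_, ?_⟩] <;>
      simp [s₁, s₂, Run.stutter, VerTrans.fst, VerTrans.snd, c, he]
  choose t ht₁ ht₂ using hstep
  refine ⟨_, ⟨s₁.verifierRun s₂ t ht₁ ht₂, rfl⟩, ?_⟩
  obtain ⟨k, hk⟩ := hfσ
  obtain ⟨m, hm⟩ := exists_syncSchedule_fst_eq hobs k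
  have hfire : s₁.trans m = some (rσ.trans k) := by
    have he := syncSchedule_succ_of_notMem Obs rσ.trace rα.trace (by rwa [hm, hk])
    simp [s₁, Run.stutter, c, he, hm]
  exact ⟨m, (t m).verifier_label_eq_inr_inl_iff.2 ⟨_, (ht₁ m).trans hfire, hk, hf⟩⟩

end PetriNet

theorem not_diagnosable_iff_verifier_fault_trace_general
    {P T Λ : Type*} [Finite P]
    (Obs Flt : Set Λ) (hFlt : Flt ⊆ Obsᶜ)
    (N : PetriNet P T Λ) (hcyc : N.NoUnobsCycle Obs)
    (f : Λ) (hf : f ∈ Flt) :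
    ¬ N.FaultDiagnosable Obs f ↔
      ∃ w ∈ (verifier N Obs f).InfTraces, ∃ k, w k = Sum.inr (Sum.inl f) :=
  ⟨PetriNet.exists_verifier_trace_of_not_faultDiagnosable (hFlt hf),
    fun ⟨_, hw, _, hk⟩ => PetriNet.not_faultDiagnosable_of_verifier_trace hcyc hw hk⟩

/-- Let `N` be a labelled Petri net (live and without cycles of unobservable
transitions), `f ∈ Σ_F` a fault, and `V_f` its verifier. Then `f` is not diagnosable in `N` if
and only if `V_f` has an infinite trace containing an occurrence of the first-replica copy `f¹`
of the fault `f`. -/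
theorem not_diagnosable_iff_verifier_fault_trace
    {P T Λ : Type*} [Finite P] [Finite T] [Finite Λ]
    (Obs Flt : Set Λ) (hFlt : Flt ⊆ Obsᶜ)
    (N : PetriNet P T Λ) (hlive : N.Live) (hcyc : N.NoUnobsCycle Obs)
    (f : Λ) (hf : f ∈ Flt) :
    ¬ N.FaultDiagnosable Obs f ↔
      ∃ w ∈ (verifier N Obs f).InfTraces, ∃ k, w k = Sum.inr (Sum.inl f) :=
  not_diagnosable_iff_verifier_fault_trace_general Obs Flt hFlt N hcyc f hf
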